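/- Let $\phi$ solve the gauge-covariant Klein–Gordon equation $\Box_A\phi - \phi = 0$ where $\Box_A = D^\mu D_\mu$ with $D_\mu = \partial_\mu + iA_\mu$ and $F = dA$. Then for any Killing vector field $Z$ of Minkowski space, $(\Box_A - 1)D_Z\phi = Q(F,\phi,Z)$, where $Q(G,f,Z) = 2iZ^\nu G_{\mu\nu}D^\mu f + i\,\partial^\mu(Z^\nu G_{\mu\nu})\,f$. -/

import Mathlib

noncomputable section

/-- The Minkowski metric `diag(-1,1,1,1)` (equal to its own inverse). -/
def mink (μ ν : Fin 4) : ℝ := if μ = ν then (if μ = 0 then -1 else 1) else 0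

/-- Partial derivative `∂_μ` of a complex-valued function on `ℝ^{3+1}`. -/
def pdC (f : (Fin 4 → ℝ) → ℂ) (μ : Fin 4) (p : Fin 4 → ℝ) : ℂ :=
  fderiv ℝ f p (Pi.single μ 1)

/-- Partial derivative `∂_μ` of a real-valued function on `ℝ^{3+1}`. -/
def pdR (f : (Fin 4 → ℝ) → ℝ) (μ : Fin 4) (p : Fin 4 → ℝ) : ℝ :=
  fderiv ℝ f p (Pi.single μ 1)

namespace S5
abbrev X := Fin 4 → ℝ

variable {F : Type*} [NormedAddCommGroup F] [NormedSpace ℝ F]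

def pd (f : X → F) (μ : Fin 4) (p : X) : F := fderiv ℝ f p (Pi.single μ 1)

lemma pd_congr {f g : X → F} (h : ∀ q, f q = g q) (μ : Fin 4) (p : X) :
    pd f μ p = pd g μ p := by rw [show f = g from funext h]

lemma pd_add {f g : X → F} {p : X} (hf : DifferentiableAt ℝ f p)
    (hg : DifferentiableAt ℝ g p) (μ : Fin 4) :
    pd (fun q => f q + g q) μ p = pd f μ p + pd g μ p := by
  unfold pd; rw [fderiv_fun_add hf hg]; rfl

lemma pd_sum {ι : Type*} (s : Finset ι) {f : ι → X → F} {p : X}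
    (h : ∀ i ∈ s, DifferentiableAt ℝ (f i) p) (μ : Fin 4) :
    pd (fun q => ∑ i ∈ s, f i q) μ p = ∑ i ∈ s, pd (f i) μ p := by
  unfold pd; rw [fderiv_fun_sum h]; simp

lemma pd_const (c : F) (μ : Fin 4) (p : X) : pd (fun _ => c) μ p = 0 := by
  simp [pd]

lemma pd_contDiff {f : X → F} (hf : ContDiff ℝ (⊤ : ℕ∞) f) (μ : Fin 4) :
    ContDiff ℝ (⊤ : ℕ∞) (fun p => pd f μ p) :=
  (hf.fderiv_right (by simp)).clm_apply contDiff_const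

lemma pd_comm {f : X → F} (hf : ContDiff ℝ (⊤ : ℕ∞) f) (μ ν : Fin 4) (p : X) :
    pd (fun q => pd f ν q) μ p = pd (fun q => pd f μ q) ν p := by
  have hd : ∀ y, HasFDerivAt f (fderiv ℝ f y) y :=
    fun y => (hf.differentiable (by simp) y).hasFDerivAt
  have hd2 : HasFDerivAt (fderiv ℝ f) (fderiv ℝ (fderiv ℝ f) p) p :=
    (((hf.fderiv_right (m := (⊤ : ℕ∞)) (by simp)).differentiable (by simp)) p).hasFDerivAt
  have hsym := second_derivative_symmetric hd hd2 (Pi.single μ 1) (Pi.single ν 1)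
  have key : ∀ (w v : Fin 4), pd (fun q => pd f w q) v p
      = fderiv ℝ (fderiv ℝ f) p (Pi.single v 1) (Pi.single w 1) := by
    intro w v
    unfold pd
    have : (fun q => fderiv ℝ f q (Pi.single w 1))
        = fun q => (ContinuousLinearMap.apply ℝ F (Pi.single w 1)) (fderiv ℝ f q) := rfl
    rw [this]
    have h3 : HasFDerivAt (fun q => (ContinuousLinearMap.apply ℝ F (Pi.single w 1)) (fderiv ℝ f q))
        ((ContinuousLinearMap.apply ℝ F (Pi.single w 1)).comp (fderiv ℝ (fderiv ℝ f) p)) p := by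
      exact (ContinuousLinearMap.apply ℝ F (Pi.single w 1)).hasFDerivAt.comp p hd2
    rw [h3.fderiv]
    rfl
  rw [key, key]
  exact hsym.symm ▸ rfl


lemma pd_mulC {f g : X → ℂ} {p : X} (hf : DifferentiableAt ℝ f p)
    (hg : DifferentiableAt ℝ g p) (μ : Fin 4) :
    pd (fun q => f q * g q) μ p = pd f μ p * g p + f p * pd g μ p := by
  unfold pd
  rw [fderiv_fun_mul hf hg]
  simp only [ContinuousLinearMap.add_apply, ContinuousLinearMap.smul_apply, smul_eq_mul]
  ring

lemma pd_mulR {f g : X → ℝ} {p : X} (hf : DifferentiableAt ℝ f p)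
    (hg : DifferentiableAt ℝ g p) (μ : Fin 4) :
    pd (fun q => f q * g q) μ p = pd f μ p * g p + f p * pd g μ p := by
  unfold pd
  rw [fderiv_fun_mul hf hg]
  simp only [ContinuousLinearMap.add_apply, ContinuousLinearMap.smul_apply, smul_eq_mul]
  ring

lemma pd_ofReal {r : X → ℝ} {p : X} (hr : DifferentiableAt ℝ r p) (μ : Fin 4) :
    pd (fun q => (r q : ℂ)) μ p = ((pd r μ p : ℝ) : ℂ) := by
  unfold pd
  have h3 : HasFDerivAt (fun q => ((r q : ℝ) : ℂ))
      (Complex.ofRealCLM.comp (fderiv ℝ r p)) p := by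
    exact Complex.ofRealCLM.hasFDerivAt.comp p hr.hasFDerivAt
  rw [h3.fderiv]
  rfl

lemma pd_constMulC (c : ℂ) {g : X → ℂ} {p : X} (hg : DifferentiableAt ℝ g p) (μ : Fin 4) :
    pd (fun q => c * g q) μ p = c * pd g μ p := by
  unfold pd
  rw [fderiv_const_mul hg]
  rfl

lemma pd_constMulR (c : ℝ) {g : X → ℝ} {p : X} (hg : DifferentiableAt ℝ g p) (μ : Fin 4) :
    pd (fun q => c * g q) μ p = c * pd g μ p := by
  unfold pd
  rw [fderiv_const_mul hg]
  rfl

lemma pd_realMul {r : X → ℝ} {g : X → ℂ} {p : X} (hr : DifferentiableAt ℝ r p)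
    (hg : DifferentiableAt ℝ g p) (μ : Fin 4) :
    pd (fun q => (r q : ℂ) * g q) μ p = ((pd r μ p : ℝ) : ℂ) * g p + (r p : ℂ) * pd g μ p := by
  have h1 : DifferentiableAt ℝ (fun q => ((r q : ℝ) : ℂ)) p := by
    exact (Complex.ofRealCLM.differentiable.differentiableAt).comp p hr
  rw [pd_mulC h1 hg, pd_ofReal hr]


def Dop (A : X → Fin 4 → ℝ) (μ : Fin 4) (g : X → ℂ) : X → ℂ :=
  fun p => pd g μ p + Complex.I * (A p μ : ℂ) * g p

def Fld (A : X → Fin 4 → ℝ) (p : X) (μ ν : Fin 4) : ℝ :=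
  pd (fun q => A q ν) μ p - pd (fun q => A q μ) ν p

variable {A : X → Fin 4 → ℝ}

lemma sOfReal {r : X → ℝ} (hr : ContDiff ℝ (⊤ : ℕ∞) r) : ContDiff ℝ (⊤ : ℕ∞) (fun q => ((r q : ℝ) : ℂ)) :=
  Complex.ofRealCLM.contDiff.comp hr

lemma sDop (hA : ContDiff ℝ (⊤ : ℕ∞) A) {g : X → ℂ} (hg : ContDiff ℝ (⊤ : ℕ∞) g) (μ : Fin 4) :
    ContDiff ℝ (⊤ : ℕ∞) (Dop A μ g) := by
  unfold Dop
  exact (pd_contDiff hg μ).add ((contDiff_const.mul (sOfReal (contDiff_pi.mp hA μ))).mul hg)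

lemma sFld (hA : ContDiff ℝ (⊤ : ℕ∞) A) (μ ν : Fin 4) : ContDiff ℝ (⊤ : ℕ∞) (fun q => Fld A q μ ν) := by
  unfold Fld
  exact (pd_contDiff (contDiff_pi.mp hA ν) μ).sub (pd_contDiff (contDiff_pi.mp hA μ) ν)

lemma Dop_congr {f g : X → ℂ} (h : ∀ q, f q = g q) (μ : Fin 4) (p : X) :
    Dop A μ f p = Dop A μ g p := by
  unfold Dop; rw [pd_congr h, h p]

lemma Dop_sum {ι : Type*} (s : Finset ι) {f : ι → X → ℂ} {p : X}
    (h : ∀ i ∈ s, DifferentiableAt ℝ (f i) p) (μ : Fin 4) :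
    Dop A μ (fun q => ∑ i ∈ s, f i q) p = ∑ i ∈ s, Dop A μ (f i) p := by
  unfold Dop
  rw [pd_sum s h, Finset.mul_sum, ← Finset.sum_add_distrib]

lemma Dop_add {f g : X → ℂ} {p : X} (hf : DifferentiableAt ℝ f p)
    (hg : DifferentiableAt ℝ g p) (μ : Fin 4) :
    Dop A μ (fun q => f q + g q) p = Dop A μ f p + Dop A μ g p := by
  unfold Dop
  rw [pd_add hf hg]
  ring

lemma Dop_constMul (c : ℂ) {g : X → ℂ} {p : X} (hg : DifferentiableAt ℝ g p) (μ : Fin 4) :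
    Dop A μ (fun q => c * g q) p = c * Dop A μ g p := by
  unfold Dop; rw [pd_constMulC c hg]; ring

lemma Dop_realMul {r : X → ℝ} {g : X → ℂ} {p : X} (hr : DifferentiableAt ℝ r p)
    (hg : DifferentiableAt ℝ g p) (μ : Fin 4) :
    Dop A μ (fun q => (r q : ℂ) * g q) p
      = ((pd r μ p : ℝ) : ℂ) * g p + (r p : ℂ) * Dop A μ g p := by
  unfold Dop; rw [pd_realMul hr hg]; ring

lemma pd_Dop (hA : ContDiff ℝ (⊤ : ℕ∞) A) {g : X → ℂ} (hg : ContDiff ℝ (⊤ : ℕ∞) g) (μ ν : Fin 4) (p : X) :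
    pd (Dop A ν g) μ p = pd (fun q => pd g ν q) μ p
      + Complex.I * (((pd (fun q => A q ν) μ p : ℝ) : ℂ) * g p + (A p ν : ℂ) * pd g μ p) := by
  have sAν : ContDiff ℝ (⊤ : ℕ∞) (fun q => A q ν) := contDiff_pi.mp hA ν
  have d1 : DifferentiableAt ℝ (fun q => pd g ν q) p := ((pd_contDiff hg ν).differentiable (by simp)) p
  have d2 : DifferentiableAt ℝ (fun q => Complex.I * (A q ν : ℂ) * g q) p :=
    (((contDiff_const.mul (sOfReal sAν)).mul hg).differentiable (by simp)) p
  have d3 : DifferentiableAt ℝ (fun q => ((A q ν : ℝ) : ℂ) * g q) p :=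
    (((sOfReal sAν).mul hg).differentiable (by simp)) p
  unfold Dop
  rw [pd_add d1 d2 μ]
  congr 1
  rw [pd_congr (fun q => mul_assoc Complex.I ((A q ν : ℝ) : ℂ) (g q)) μ p]
  rw [pd_constMulC _ d3, pd_realMul (sAν.differentiable (by simp) p) (hg.differentiable (by simp) p)]

lemma Dop_comm (hA : ContDiff ℝ (⊤ : ℕ∞) A) {g : X → ℂ} (hg : ContDiff ℝ (⊤ : ℕ∞) g) (μ ν : Fin 4) (p : X) :
    Dop A μ (Dop A ν g) p
      = Dop A ν (Dop A μ g) p + Complex.I * ((Fld A p μ ν : ℝ) : ℂ) * g p := by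
  have e1 : ∀ a b, Dop A a (Dop A b g) p
      = pd (Dop A b g) a p + Complex.I * (A p a : ℂ) * (Dop A b g) p := fun a b => rfl
  rw [e1, e1, pd_Dop hA hg μ ν, pd_Dop hA hg ν μ, pd_comm hg μ ν]
  unfold Dop Fld
  push_cast
  ring


lemma mink_diag_sum (x : Fin 4 → ℝ) (ν : Fin 4) : ∑ δ, mink ν δ * x δ = mink ν ν * x ν := by
  rw [Finset.sum_eq_single ν]
  · intro b _ hb
    simp [mink, Ne.symm hb]
  · simp

lemma mink_sq (μ : Fin 4) : mink μ μ * mink μ μ = 1 := by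
  unfold mink
  by_cases h : μ = 0 <;> simp [h]

lemma mink_symm (a b : Fin 4) : mink a b = mink b a := by
  unfold mink
  rcases eq_or_ne a b with h | h
  · subst h; rfl
  · rw [if_neg h, if_neg (Ne.symm h)]

def Zl (Z : X → Fin 4 → ℝ) (ν : Fin 4) : X → ℝ := fun q => ∑ δ, mink ν δ * Z q δ

variable {Z : X → Fin 4 → ℝ}

lemma sZl (hZ : ContDiff ℝ (⊤ : ℕ∞) Z) (ν : Fin 4) : ContDiff ℝ (⊤ : ℕ∞) (Zl Z ν) := by
  unfold Zl
  exact ContDiff.sum fun δ _ => contDiff_const.mul (contDiff_pi.mp hZ δ)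

lemma killing_second (hZ : ContDiff ℝ (⊤ : ℕ∞) Z)
    (hK : ∀ p μ ν, pd (Zl Z ν) μ p + pd (Zl Z μ) ν p = 0)
    (i j k : Fin 4) (p : X) : pd (fun q => pd (Zl Z k) j q) i p = 0 := by
  set a : Fin 4 → Fin 4 → Fin 4 → ℝ := fun i j k => pd (fun q => pd (Zl Z k) j q) i p with ha
  have dd : ∀ (j k : Fin 4), DifferentiableAt ℝ (fun q => pd (Zl Z k) j q) p :=
    fun j k => ((pd_contDiff (sZl hZ k) j).differentiable (by simp)) p
  have h1 : ∀ i j k, a i j k = - a i k j := by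
    intro i j k
    have : a i j k + a i k j = 0 := by
      rw [ha]
      simp only
      rw [← pd_add (dd j k) (dd k j) i]
      rw [pd_congr (fun q => hK q j k) i p, pd_const]
    linarith
  have h2 : ∀ i j k, a i j k = a j i k := fun i j k => pd_comm (sZl hZ k) i j p
  have key : a i j k = - a i j k := by
    calc a i j k = -a i k j := h1 i j k
      _ = -a k i j := by rw [h2 i k j]
      _ = a k j i := by rw [h1 k i j]; ring
      _ = a j k i := h2 k j i
      _ = -a j i k := h1 j k i
      _ = -a i j k := by rw [← h2 i j k]
  show a i j k = 0
  linarith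

lemma killing_second' (hZ : ContDiff ℝ (⊤ : ℕ∞) Z)
    (hK : ∀ p μ ν, pd (Zl Z ν) μ p + pd (Zl Z μ) ν p = 0)
    (μ ν α : Fin 4) (p : X) : pd (fun q => pd (fun r => Z r α) ν q) μ p = 0 := by
  have hfun : ∀ r, Z r α = mink α α * Zl Z α r := by
    intro r
    rw [Zl, mink_diag_sum, ← mul_assoc, mink_sq, one_mul]
  have hstep : ∀ q, pd (fun r => Z r α) ν q = mink α α * pd (Zl Z α) ν q := by
    intro q
    rw [pd_congr hfun ν q, pd_constMulR _ (((sZl hZ α).differentiable (by simp)) q)]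
  rw [pd_congr hstep μ p,
    pd_constMulR _ (((pd_contDiff (sZl hZ α) ν).differentiable (by simp)) p),
    killing_second hZ hK μ ν α p, mul_zero]



lemma dsum (x : Fin 4 → ℂ) (μ : Fin 4) :
    (∑ ν, (mink μ ν : ℂ) * x ν) = (mink μ μ : ℂ) * x μ := by
  rw [Finset.sum_eq_single μ]
  · intro b _ hb
    have hzero : mink μ b = 0 := by simp [mink, Ne.symm hb]
    rw [hzero]
    simp
  · simp

set_option maxHeartbeats 1000000 in
lemma assembly (z φ1 : Fin 4 → ℂ) (φp : ℂ) (z1 f φ2 : Fin 4 → Fin 4 → ℂ)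
    (f1 φ3 : Fin 4 → Fin 4 → Fin 4 → ℂ)
    (h2 : ∀ μ ν, φ2 μ ν = φ2 ν μ + Complex.I * f μ ν * φp)
    (h3 : ∀ μ ν α, φ3 μ ν α = φ3 α μ ν + Complex.I * f1 μ ν α * φp
        + Complex.I * f ν α * φ1 μ + Complex.I * f μ α * φ1 ν)
    (h4 : ∀ α, (∑ μ, ∑ ν, (mink μ ν : ℂ) * φ3 α μ ν) = φ1 α)
    (hkz : ∀ μ ν, (mink ν ν : ℂ) * z1 μ ν + (mink μ μ : ℂ) * z1 ν μ = 0) :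
    (∑ μ, ∑ ν, (mink μ ν : ℂ) * (∑ α, (z1 ν α * φ2 μ α + z1 μ α * φ2 ν α + z α * φ3 μ ν α)))
      - (∑ α, z α * φ1 α)
    = 2 * Complex.I * (∑ μ, ∑ ν, ∑ γ, (mink μ γ : ℂ) * z ν * f μ ν * φ1 γ)
      + Complex.I * (∑ μ, ∑ γ, (mink μ γ : ℂ) * (∑ ν, (z1 γ ν * f μ ν + z ν * f1 γ μ ν))) * φp := by
  have hc : ∀ μ α, (mink α α : ℂ) * z1 α μ = -((mink μ μ : ℂ) * z1 μ α) := by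
    intro μ α
    have h := hkz α μ
    have s1 : ((mink μ μ : ℝ) : ℂ) * ((mink μ μ : ℝ) : ℂ) = 1 := by
      exact_mod_cast congrArg (Complex.ofReal) (mink_sq μ)
    have s2 : ((mink α α : ℝ) : ℂ) * ((mink α α : ℝ) : ℂ) = 1 := by
      exact_mod_cast congrArg (Complex.ofReal) (mink_sq α)
    linear_combination ((mink μ μ : ℂ) * (mink α α : ℂ)) * h
      - ((mink α α : ℂ) * z1 α μ) * s1 - ((mink μ μ : ℂ) * z1 μ α) * s2
  have htwo : (∑ μ, ∑ α, (mink μ μ : ℂ) * (z1 μ α * φ2 μ α))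
        + (∑ μ, ∑ α, (mink μ μ : ℂ) * (z1 μ α * φ2 μ α))
      = ∑ μ, ∑ α, Complex.I * φp * ((mink μ μ : ℂ) * (z1 μ α * f μ α)) := by
    have hswap : (∑ μ, ∑ α, (mink μ μ : ℂ) * (z1 μ α * φ2 μ α))
        = ∑ μ, ∑ α, (mink α α : ℂ) * (z1 α μ * φ2 α μ) := by
      rw [Finset.sum_comm]
    nth_rewrite 2 [hswap]
    rw [← Finset.sum_add_distrib]
    refine Finset.sum_congr rfl fun μ _ => ?_
    rw [← Finset.sum_add_distrib]
    refine Finset.sum_congr rfl fun α _ => ?_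
    rw [h2 μ α]
    linear_combination (φ2 α μ) * hc μ α
  have hd1 : (∑ μ, ∑ ν, ∑ α, (mink μ ν : ℂ) * (z1 ν α * φ2 μ α))
      = ∑ μ, ∑ α, (mink μ μ : ℂ) * (z1 μ α * φ2 μ α) := by
    refine Finset.sum_congr rfl fun μ _ => ?_
    rw [Finset.sum_comm]
    exact Finset.sum_congr rfl fun α _ => dsum (fun ν => z1 ν α * φ2 μ α) μ
  have hd2 : (∑ μ, ∑ ν, ∑ α, (mink μ ν : ℂ) * (z1 μ α * φ2 ν α))
      = ∑ μ, ∑ α, (mink μ μ : ℂ) * (z1 μ α * φ2 μ α) := by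
    refine Finset.sum_congr rfl fun μ _ => ?_
    rw [Finset.sum_comm]
    exact Finset.sum_congr rfl fun α _ => dsum (fun ν => z1 μ α * φ2 ν α) μ
  have hp1 : (∑ μ, ∑ ν, ∑ α, (mink μ ν : ℂ) * (z α * φ3 α μ ν)) = ∑ α, z α * φ1 α := by
    have e1 : ∀ μ : Fin 4, (∑ ν, ∑ α, (mink μ ν : ℂ) * (z α * φ3 α μ ν))
        = ∑ α, ∑ ν, (mink μ ν : ℂ) * (z α * φ3 α μ ν) := fun μ => by rw [Finset.sum_comm]
    simp only [e1]
    rw [Finset.sum_comm]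
    refine Finset.sum_congr rfl fun α _ => ?_
    rw [← h4 α, Finset.mul_sum]
    refine Finset.sum_congr rfl fun μ _ => ?_
    rw [Finset.mul_sum]
    exact Finset.sum_congr rfl fun ν _ => by ring
  have hS2 : (∑ μ, ∑ ν, ∑ α, (mink μ ν : ℂ) * (z α * φ3 μ ν α))
      = ((∑ α, z α * φ1 α)
        + (∑ μ, ∑ ν, ∑ α, Complex.I * φp * ((mink μ ν : ℂ) * (z α * f1 μ ν α)))
        + (∑ μ, ∑ ν, ∑ α, Complex.I * ((mink μ ν : ℂ) * (z α * (f ν α * φ1 μ))))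
        + (∑ μ, ∑ ν, ∑ α, Complex.I * ((mink μ ν : ℂ) * (z α * (f μ α * φ1 ν))))) := by
    have step1 : (∑ μ, ∑ ν, ∑ α, (mink μ ν : ℂ) * (z α * φ3 μ ν α))
        = ∑ μ, ∑ ν, ∑ α, ((mink μ ν : ℂ) * (z α * φ3 α μ ν)
            + Complex.I * φp * ((mink μ ν : ℂ) * (z α * f1 μ ν α))
            + Complex.I * ((mink μ ν : ℂ) * (z α * (f ν α * φ1 μ)))
            + Complex.I * ((mink μ ν : ℂ) * (z α * (f μ α * φ1 ν)))) := by
      refine Finset.sum_congr rfl fun μ _ => Finset.sum_congr rfl fun ν _ =>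
        Finset.sum_congr rfl fun α _ => ?_
      rw [h3 μ ν α]; ring
    rw [step1]
    simp only [Finset.sum_add_distrib]
    rw [hp1]
  have hsplit : (∑ μ, ∑ ν, (mink μ ν : ℂ)
        * (∑ α, (z1 ν α * φ2 μ α + z1 μ α * φ2 ν α + z α * φ3 μ ν α)))
      = (∑ μ, ∑ ν, ∑ α, (mink μ ν : ℂ) * (z1 ν α * φ2 μ α))
        + (∑ μ, ∑ ν, ∑ α, (mink μ ν : ℂ) * (z1 μ α * φ2 ν α))
        + (∑ μ, ∑ ν, ∑ α, (mink μ ν : ℂ) * (z α * φ3 μ ν α)) := by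
    simp only [Finset.mul_sum, mul_add, Finset.sum_add_distrib]
  rw [hsplit, hd1, hd2, hS2]
  rw [htwo]
  have hT3 : (∑ μ, ∑ ν, ∑ α, Complex.I * ((mink μ ν : ℂ) * (z α * (f μ α * φ1 ν))))
      = ∑ μ, ∑ ν, ∑ γ, Complex.I * ((mink μ γ : ℂ) * (z ν * (f μ ν * φ1 γ))) := by
    refine Finset.sum_congr rfl fun μ _ => ?_
    rw [Finset.sum_comm]
  have hT2 : (∑ μ, ∑ ν, ∑ α, Complex.I * ((mink μ ν : ℂ) * (z α * (f ν α * φ1 μ))))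
      = ∑ μ, ∑ ν, ∑ γ, Complex.I * ((mink μ γ : ℂ) * (z ν * (f μ ν * φ1 γ))) := by
    rw [Finset.sum_comm]
    refine Finset.sum_congr rfl fun b _ => ?_
    rw [Finset.sum_comm]
    refine Finset.sum_congr rfl fun c _ => Finset.sum_congr rfl fun a _ => ?_
    rw [mink_symm a b]
  have hQsplit : (∑ μ, ∑ γ, (mink μ γ : ℂ) * (∑ ν, (z1 γ ν * f μ ν + z ν * f1 γ μ ν)))
      = (∑ μ, ∑ γ, ∑ ν, (mink μ γ : ℂ) * (z1 γ ν * f μ ν))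
        + (∑ μ, ∑ γ, ∑ ν, (mink μ γ : ℂ) * (z ν * f1 γ μ ν)) := by
    simp only [Finset.mul_sum, mul_add, Finset.sum_add_distrib]
  have hQa : (∑ μ, ∑ γ, ∑ ν, (mink μ γ : ℂ) * (z1 γ ν * f μ ν))
      = ∑ μ, ∑ ν, (mink μ μ : ℂ) * (z1 μ ν * f μ ν) := by
    refine Finset.sum_congr rfl fun μ _ => ?_
    rw [Finset.sum_comm]
    exact Finset.sum_congr rfl fun ν _ => dsum (fun γ => z1 γ ν * f μ ν) μ
  have hQb : (∑ μ, ∑ γ, ∑ ν, (mink μ γ : ℂ) * (z ν * f1 γ μ ν))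
      = ∑ μ, ∑ ν, ∑ α, (mink μ ν : ℂ) * (z α * f1 μ ν α) := by
    rw [Finset.sum_comm]
    refine Finset.sum_congr rfl fun γ _ => Finset.sum_congr rfl fun μ _ =>
      Finset.sum_congr rfl fun ν _ => ?_
    rw [mink_symm μ γ]
  have hW : (∑ μ, ∑ α, Complex.I * φp * ((mink μ μ : ℂ) * (z1 μ α * f μ α)))
      = Complex.I * φp * (∑ μ, ∑ ν, (mink μ μ : ℂ) * (z1 μ ν * f μ ν)) := by
    simp only [Finset.mul_sum]
  have hT1fac : (∑ μ, ∑ ν, ∑ α, Complex.I * φp * ((mink μ ν : ℂ) * (z α * f1 μ ν α)))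
      = Complex.I * φp * (∑ μ, ∑ ν, ∑ α, (mink μ ν : ℂ) * (z α * f1 μ ν α)) := by
    simp only [Finset.mul_sum]
  have hN1fac : (∑ μ, ∑ ν, ∑ γ, Complex.I * ((mink μ γ : ℂ) * (z ν * (f μ ν * φ1 γ))))
      = Complex.I * (∑ μ, ∑ ν, ∑ γ, (mink μ γ : ℂ) * z ν * f μ ν * φ1 γ) := by
    simp only [Finset.mul_sum]
    refine Finset.sum_congr rfl fun μ _ => Finset.sum_congr rfl fun ν _ =>
      Finset.sum_congr rfl fun γ _ => by ring
  rw [hT2, hT3, hW, hT1fac, hQsplit, hQa, hQb, hN1fac]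
  ring


theorem main (A : X → Fin 4 → ℝ) (φ : X → ℂ) (Z : X → Fin 4 → ℝ)
    (hA : ContDiff ℝ (⊤ : ℕ∞) A) (hφ : ContDiff ℝ (⊤ : ℕ∞) φ) (hZ : ContDiff ℝ (⊤ : ℕ∞) Z)
    (hK : ∀ p μ ν, pd (fun q => ∑ δ, mink ν δ * Z q δ) μ p
        + pd (fun q => ∑ δ, mink μ δ * Z q δ) ν p = 0)
    (hbox : ∀ q, (∑ μ, ∑ ν, (mink μ ν : ℂ) * Dop A μ (Dop A ν φ) q) = φ q) (p : X) :
    (∑ μ, ∑ ν, (mink μ ν : ℂ)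
        * Dop A μ (Dop A ν (fun q => ∑ α, ((Z q α : ℝ) : ℂ) * Dop A α φ q)) p)
      - (∑ α, ((Z p α : ℝ) : ℂ) * Dop A α φ p)
    = 2 * Complex.I * (∑ μ, ∑ ν, ∑ γ, (mink μ γ : ℂ) * ((Z p ν : ℝ) : ℂ)
          * ((Fld A p μ ν : ℝ) : ℂ) * Dop A γ φ p)
      + Complex.I * (((∑ μ, ∑ γ, mink μ γ * pd (fun q => ∑ ν, Z q ν * Fld A q μ ν) γ p : ℝ)) : ℂ)
          * φ p := by
  have sφ1 : ∀ α, ContDiff ℝ (⊤ : ℕ∞) (Dop A α φ) := fun α => sDop hA hφ α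
  have sφ2 : ∀ ν α, ContDiff ℝ (⊤ : ℕ∞) (Dop A ν (Dop A α φ)) := fun ν α => sDop hA (sφ1 α) ν
  have sZα : ∀ α : Fin 4, ContDiff ℝ (⊤ : ℕ∞) (fun q => Z q α) := fun α => contDiff_pi.mp hZ α
  have sZ1 : ∀ ν α : Fin 4, ContDiff ℝ (⊤ : ℕ∞) (fun q => pd (fun r => Z r α) ν q) :=
    fun ν α => pd_contDiff (sZα α) ν
  -- step A
  have stepA : ∀ (ν : Fin 4) (q : X),
      Dop A ν (fun q => ∑ α, ((Z q α : ℝ) : ℂ) * Dop A α φ q) q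
        = ∑ α, (((pd (fun r => Z r α) ν q : ℝ) : ℂ) * Dop A α φ q
            + ((Z q α : ℝ) : ℂ) * Dop A ν (Dop A α φ) q) := by
    intro ν q
    rw [Dop_sum Finset.univ
      (fun α _ => (((sOfReal (sZα α)).mul (sφ1 α)).differentiable (by simp)) q) ν]
    exact Finset.sum_congr rfl fun α _ =>
      Dop_realMul ((sZα α).differentiable (by simp) q) ((sφ1 α).differentiable (by simp) q) ν
  -- step B
  have stepB : ∀ μ ν : Fin 4,
      Dop A μ (Dop A ν (fun q => ∑ α, ((Z q α : ℝ) : ℂ) * Dop A α φ q)) p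
        = ∑ α, ((((pd (fun r => Z r α) ν p : ℝ)) : ℂ) * Dop A μ (Dop A α φ) p
            + (((pd (fun r => Z r α) μ p : ℝ)) : ℂ) * Dop A ν (Dop A α φ) p
            + ((Z p α : ℝ) : ℂ) * Dop A μ (Dop A ν (Dop A α φ)) p) := by
    intro μ ν
    rw [Dop_congr (stepA ν) μ p]
    rw [Dop_sum Finset.univ (fun α _ => ((((sOfReal (sZ1 ν α)).mul (sφ1 α)).add
      ((sOfReal (sZα α)).mul (sφ2 ν α))).differentiable (by simp)) p) μ]
    refine Finset.sum_congr rfl fun α _ => ?_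
    rw [Dop_add ((((sOfReal (sZ1 ν α)).mul (sφ1 α))).differentiable (by simp) p)
      ((((sOfReal (sZα α)).mul (sφ2 ν α))).differentiable (by simp) p) μ]
    rw [Dop_realMul (((sZ1 ν α).differentiable (by simp)) p) (((sφ1 α).differentiable (by simp)) p) μ]
    rw [Dop_realMul (((sZα α).differentiable (by simp)) p) (((sφ2 ν α).differentiable (by simp)) p) μ]
    rw [killing_second' hZ hK μ ν α p]
    push_cast
    ring
  -- h2
  have h2 : ∀ μ ν : Fin 4, Dop A μ (Dop A ν φ) p
      = Dop A ν (Dop A μ φ) p + Complex.I * ((Fld A p μ ν : ℝ) : ℂ) * φ p :=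
    fun μ ν => Dop_comm hA hφ μ ν p
  -- h3
  have h3 : ∀ μ ν α : Fin 4, Dop A μ (Dop A ν (Dop A α φ)) p
      = Dop A α (Dop A μ (Dop A ν φ)) p
        + Complex.I * ((pd (fun q => Fld A q ν α) μ p : ℝ) : ℂ) * φ p
        + Complex.I * ((Fld A p ν α : ℝ) : ℂ) * Dop A μ φ p
        + Complex.I * ((Fld A p μ α : ℝ) : ℂ) * Dop A ν φ p := by
    intro μ ν α
    have hcongr : ∀ q, Dop A ν (Dop A α φ) q
        = Dop A α (Dop A ν φ) q + Complex.I * (((Fld A q ν α : ℝ) : ℂ) * φ q) := by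
      intro q
      rw [Dop_comm hA hφ ν α q]
      ring
    rw [Dop_congr hcongr μ p]
    rw [Dop_add ((sφ2 α ν).differentiable (by simp) p)
      ((contDiff_const.mul ((sOfReal (sFld hA ν α)).mul hφ)).differentiable (by simp) p) μ]
    rw [Dop_comm hA (sφ1 ν) μ α p]
    rw [Dop_constMul Complex.I (((sOfReal (sFld hA ν α)).mul hφ).differentiable (by simp) p) μ]
    rw [Dop_realMul ((sFld hA ν α).differentiable (by simp) p) (hφ.differentiable (by simp) p) μ]
    ring
  -- h4
  have h4 : ∀ α : Fin 4,
      (∑ μ, ∑ ν, (mink μ ν : ℂ) * Dop A α (Dop A μ (Dop A ν φ)) p) = Dop A α φ p := by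
    intro α
    have e : ∀ q, φ q = ∑ μ, ∑ ν, (mink μ ν : ℂ) * Dop A μ (Dop A ν φ) q :=
      fun q => (hbox q).symm
    have : Dop A α φ p
        = Dop A α (fun q => ∑ μ, ∑ ν, (mink μ ν : ℂ) * Dop A μ (Dop A ν φ) q) p :=
      Dop_congr e α p
    rw [this]
    rw [Dop_sum Finset.univ (fun μ _ => (ContDiff.sum fun ν _ =>
      contDiff_const.mul (sφ2 μ ν)).differentiable (by simp) p) α]
    refine Finset.sum_congr rfl fun μ _ => ?_
    rw [Dop_sum Finset.univ (fun ν _ =>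
      (contDiff_const.mul (sφ2 μ ν)).differentiable (by simp) p) α]
    refine Finset.sum_congr rfl fun ν _ => ?_
    rw [Dop_constMul ((mink μ ν : ℝ) : ℂ) ((sφ2 μ ν).differentiable (by simp) p) α]
  -- Killing, first derivative form
  have hkz : ∀ μ ν : Fin 4, ((mink ν ν : ℝ) : ℂ) * ((pd (fun q => Z q ν) μ p : ℝ) : ℂ)
      + ((mink μ μ : ℝ) : ℂ) * ((pd (fun q => Z q μ) ν p : ℝ) : ℂ) = 0 := by
    intro μ ν
    have h := hK p μ ν
    have e1 : ∀ (ν : Fin 4) (q : X), (∑ δ, mink ν δ * Z q δ) = mink ν ν * Z q ν :=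
      fun ν q => mink_diag_sum (fun δ => Z q δ) ν
    rw [pd_congr (e1 ν) μ p, pd_congr (e1 μ) ν p,
      pd_constMulR _ ((sZα ν).differentiable (by simp) p),
      pd_constMulR _ ((sZα μ).differentiable (by simp) p)] at h
    exact_mod_cast congrArg (Complex.ofReal) h
  -- Q coefficient conversion
  have hQR : ∀ μ γ : Fin 4, pd (fun q => ∑ ν, Z q ν * Fld A q μ ν) γ p
      = ∑ ν, (pd (fun q => Z q ν) γ p * Fld A p μ ν
          + Z p ν * pd (fun q => Fld A q μ ν) γ p) := by
    intro μ γ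
    rw [pd_sum Finset.univ
      (fun ν _ => ((sZα ν).mul (sFld hA μ ν)).differentiable (by simp) p) γ]
    exact Finset.sum_congr rfl fun ν _ =>
      pd_mulR ((sZα ν).differentiable (by simp) p) ((sFld hA μ ν).differentiable (by simp) p) γ
  have hQC : (((∑ μ, ∑ γ, mink μ γ * pd (fun q => ∑ ν, Z q ν * Fld A q μ ν) γ p : ℝ)) : ℂ)
      = ∑ μ, ∑ γ, (mink μ γ : ℂ) * (∑ ν,
          (((pd (fun r => Z r ν) γ p : ℝ) : ℂ) * ((Fld A p μ ν : ℝ) : ℂ)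
            + ((Z p ν : ℝ) : ℂ) * ((pd (fun q => Fld A q μ ν) γ p : ℝ) : ℂ))) := by
    have e2 : (∑ μ, ∑ γ, mink μ γ * pd (fun q => ∑ ν, Z q ν * Fld A q μ ν) γ p)
        = ∑ μ, ∑ γ, mink μ γ * (∑ ν, (pd (fun q => Z q ν) γ p * Fld A p μ ν
            + Z p ν * pd (fun q => Fld A q μ ν) γ p)) := by
      exact Finset.sum_congr rfl fun μ _ => Finset.sum_congr rfl fun γ _ => by rw [hQR μ γ]
    rw [e2]
    push_cast
    rfl
  -- assemble
  have hBsum : (∑ μ, ∑ ν, (mink μ ν : ℂ)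
        * Dop A μ (Dop A ν (fun q => ∑ α, ((Z q α : ℝ) : ℂ) * Dop A α φ q)) p)
      = ∑ μ, ∑ ν, (mink μ ν : ℂ) * (∑ α,
          ((((pd (fun r => Z r α) ν p : ℝ)) : ℂ) * Dop A μ (Dop A α φ) p
            + (((pd (fun r => Z r α) μ p : ℝ)) : ℂ) * Dop A ν (Dop A α φ) p
            + ((Z p α : ℝ) : ℂ) * Dop A μ (Dop A ν (Dop A α φ)) p)) :=
    Finset.sum_congr rfl fun μ _ => Finset.sum_congr rfl fun ν _ => by rw [stepB μ ν]
  rw [hBsum, hQC]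
  exact assembly (fun α => ((Z p α : ℝ) : ℂ)) (fun γ => Dop A γ φ p) (φ p)
    (fun ν α => ((pd (fun r => Z r α) ν p : ℝ) : ℂ))
    (fun μ ν => ((Fld A p μ ν : ℝ) : ℂ))
    (fun μ α => Dop A μ (Dop A α φ) p)
    (fun μ ν α => ((pd (fun q => Fld A q ν α) μ p : ℝ) : ℂ))
    (fun μ ν α => Dop A μ (Dop A ν (Dop A α φ)) p)
    h2 h3 h4 hkz

end S5

/-- if `□_A φ − φ = 0` then for every Killing field `Z` of Minkowski space,
`(□_A − 1) D_Z φ = Q(F, φ, Z)` where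
`Q(G, f, Z) = 2i Z^ν G_{μν} D^μ f + i ∂^μ(Z^ν G_{μν}) f`. -/
theorem stmt5 (A : (Fin 4 → ℝ) → Fin 4 → ℝ) (φ : (Fin 4 → ℝ) → ℂ)
    (Z : (Fin 4 → ℝ) → Fin 4 → ℝ)
    (hA : ContDiff ℝ (⊤ : ℕ∞) A) (hφ : ContDiff ℝ (⊤ : ℕ∞) φ) (hZ : ContDiff ℝ (⊤ : ℕ∞) Z)
    (hKilling : ∀ p μ ν, pdR (fun q => ∑ δ, mink ν δ * Z q δ) μ p
        + pdR (fun q => ∑ δ, mink μ δ * Z q δ) ν p = 0) :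
    let D : Fin 4 → ((Fin 4 → ℝ) → ℂ) → (Fin 4 → ℝ) → ℂ :=
      fun μ g p => pdC g μ p + Complex.I * (A p μ : ℂ) * g p
    let Box : ((Fin 4 → ℝ) → ℂ) → (Fin 4 → ℝ) → ℂ :=
      fun g p => ∑ μ, ∑ ν, (mink μ ν : ℂ) * D μ (D ν g) p
    let F : (Fin 4 → ℝ) → Fin 4 → Fin 4 → ℝ :=
      fun p μ ν => pdR (fun q => A q ν) μ p - pdR (fun q => A q μ) ν p
    let DZφ : (Fin 4 → ℝ) → ℂ := fun p => ∑ μ, (Z p μ : ℂ) * D μ φ p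
    let Q : (Fin 4 → ℝ) → ℂ := fun p =>
      2 * Complex.I * ∑ μ, ∑ ν, ∑ γ, (mink μ γ : ℂ) * (Z p ν : ℂ) * (F p μ ν : ℂ) * D γ φ p
        + Complex.I * ((∑ μ, ∑ γ, mink μ γ * pdR (fun q => ∑ ν, Z q ν * F q μ ν) γ p : ℝ) : ℂ)
          * φ p
    (∀ p, Box φ p - φ p = 0) → ∀ p, Box DZφ p - DZφ p = Q p := by
  intro D Box F DZφ Q hbox p
  have hbox' : ∀ q, (∑ μ, ∑ ν, (mink μ ν : ℂ) * S5.Dop A μ (S5.Dop A ν φ) q) = φ q := by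
    intro q
    exact sub_eq_zero.mp (hbox q)
  exact S5.main A φ Z hA hφ hZ hKilling hbox' p
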